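/- Let τ > 3/2. Consider the truncated-cone polyhedron Δ_ε in the upper half space with base the regular n-gon of circumradius ρ(ε) centered at (0,0,ε) in the horosphere {x³ = ε} and apex (0,0,ε⁻¹) (truncated to the region ε ≤ x³ ≤ ε⁻¹). If ρ(ε) → ∞ and ρ(ε) = o(ε^{-2τ}) as ε → 0, then both error terms ∫_{∂Δ_ε} cosh^{-2τ+1}(r) dσ̄ and ∫_{E_ε} cosh^{-2τ+1}(r) dλ̄ tend to 0 as ε → 0, where E_ε is the union of all edges of Δ_ε, r is the hyperbolic distance to o = (0,0,1), and dσ̄, dλ̄ are the hyperbolic area and length elements. -/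

import Mathlib

open Real MeasureTheory Filter Topology intervalIntegral

noncomputable section

/-- `cosh r` where `r` is hyperbolic distance from `(x,y,z)` to `o = (0,0,1)`:
`2 cosh r = (x²+y²+z²+1)/z`. -/
def coshR (x y z : ℝ) : ℝ := (x ^ 2 + y ^ 2 + z ^ 2 + 1) / (2 * z)

/-- `ξ(z) = ρ(1-εz)/(1-ε²)`: Euclidean distance of the slanted edge to the `z`-axis. -/
def edgeProfile (ε ρ z : ℝ) : ℝ := ρ * (1 - ε * z) / (1 - ε ^ 2)

/-- The regular `n`-gon of circumradius `ρ` centered at the origin of `ℝ²`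
(intersection of `n` half planes). -/
def ngon (n : ℕ) (ρ : ℝ) : Set (ℝ × ℝ) :=
  {p : ℝ × ℝ | ∀ k : Fin n,
    Real.cos ((2 * π * k + π) / n) * p.1 + Real.sin ((2 * π * k + π) / n) * p.2
      ≤ ρ * Real.cos (π / n)}

/-- Integral of `cosh^{-2τ+1} r` over the base face (the regular `n`-gon at height `ε`),
with hyperbolic area element `ε⁻² dx dy`. -/
def baseFaceInt (τ : ℝ) (n : ℕ) (ρ ε : ℝ) : ℝ :=
  ∫ p in ngon n ρ, (coshR p.1 p.2 ε) ^ (-2 * τ + 1) * (ε ^ 2)⁻¹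

/-- Integral of `cosh^{-2τ+1} r` over one slanted side face, with hyperbolic area
element `z⁻² √(1 + ε²ρ²/(1-ε²)²) dy dz`. -/
def sideFaceInt (τ : ℝ) (n : ℕ) (ρ ε : ℝ) : ℝ :=
  ∫ z in ε..ε⁻¹,
    (∫ y in (-(edgeProfile ε ρ z * Real.sin (π / n)))..(edgeProfile ε ρ z * Real.sin (π / n)),
      (coshR (edgeProfile ε ρ z * Real.cos (π / n)) y z) ^ (-2 * τ + 1)) *
    (z ^ 2)⁻¹ * Real.sqrt (1 + ε ^ 2 * ρ ^ 2 / (1 - ε ^ 2) ^ 2)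

/-- Integral of `cosh^{-2τ+1} r` over one slanted edge
`E₁ = {(0, ρ(1-εz)/(1-ε²), z) : z ∈ [ε, ε⁻¹]}`, with hyperbolic length element
`z⁻¹ √(1 + ε²ρ²/(1-ε²)²) dz`. -/
def slantEdgeInt (τ : ℝ) (ρ ε : ℝ) : ℝ :=
  ∫ z in ε..ε⁻¹,
    (coshR 0 (edgeProfile ε ρ z) z) ^ (-2 * τ + 1) * z⁻¹ *
      Real.sqrt (1 + ε ^ 2 * ρ ^ 2 / (1 - ε ^ 2) ^ 2)

/-- Integral of `cosh^{-2τ+1} r` over one base edge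
`E₂ = {(ρ cos(π/n), y, ε) : |y| ≤ ρ sin(π/n)}`, with hyperbolic length element `ε⁻¹ dy`. -/
def baseEdgeInt (τ : ℝ) (n : ℕ) (ρ ε : ℝ) : ℝ :=
  ∫ y in (-(ρ * Real.sin (π / n)))..(ρ * Real.sin (π / n)),
    (coshR (ρ * Real.cos (π / n)) y ε) ^ (-2 * τ + 1) * ε⁻¹


set_option maxHeartbeats 1600000

lemma sqrt_one_add_sq_le {A : ℝ} (hA : 0 ≤ A) : Real.sqrt (1 + A ^ 2) ≤ 1 + A := by
  calc Real.sqrt (1 + A ^ 2) ≤ Real.sqrt ((1 + A) ^ 2) := Real.sqrt_le_sqrt (by nlinarith)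
    _ = 1 + A := Real.sqrt_sq (by positivity)

lemma integral_inv_sq_add_sq_le {c : ℝ} (hc : 0 < c) (a b : ℝ) :
    ∫ z in a..b, (c ^ 2 + z ^ 2)⁻¹ ≤ π / c := by
  have hder : ∀ z ∈ Set.uIcc a b,
      HasDerivAt (fun z => Real.arctan (z / c) / c) ((c ^ 2 + z ^ 2)⁻¹) z := by
    intro z _
    have h1 : HasDerivAt (fun z : ℝ => z / c) (1 / c) z := by
      simpa using (hasDerivAt_id z).div_const c
    have h2 := ((Real.hasDerivAt_arctan (z / c)).comp z h1).div_const c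
    refine h2.congr_deriv ?_
    field_simp
  have hcont : IntervalIntegrable (fun z : ℝ => (c ^ 2 + z ^ 2)⁻¹) volume a b := by
    apply Continuous.intervalIntegrable
    exact ((continuous_const.add (continuous_pow 2)).inv₀ (fun z => by simp only [Pi.add_apply]; positivity))
  rw [intervalIntegral.integral_eq_sub_of_hasDerivAt hder hcont]
  have h1 := Real.arctan_lt_pi_div_two (b / c)
  have h2 := Real.neg_pi_div_two_lt_arctan (a / c)
  rw [div_sub_div_same]
  gcongr
  linarith

lemma key_bound {c z w : ℝ} (p r : ℝ) (hc : 0 < c) (hz : 0 ≤ z) (hp : 0 ≤ p)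
    (hpr : p + 2 ≤ 2 * r) (hzw : z ^ 2 ≤ w) (hcw : c ^ 2 ≤ w) :
    z ^ p * w ^ (-r) ≤ c ^ (p - 2 * r + 2) * w⁻¹ := by
  have hw : (0:ℝ) < w := lt_of_lt_of_le (by positivity) hcw
  have hzs : z ≤ Real.sqrt w := Real.le_sqrt_of_sq_le hzw
  have h1 : z ^ p ≤ w ^ (p / 2) := by
    calc z ^ p ≤ Real.sqrt w ^ p :=
          Real.rpow_le_rpow hz hzs hp
      _ = w ^ (p / 2) := by
          rw [Real.sqrt_eq_rpow, ← Real.rpow_mul hw.le]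
          ring_nf
  have h2 : z ^ p * w ^ (-r) ≤ w ^ (p / 2 - r) := by
    rw [show p / 2 - r = p / 2 + -r by ring, Real.rpow_add hw]
    exact mul_le_mul_of_nonneg_right h1 (Real.rpow_nonneg hw.le _)
  refine h2.trans ?_
  have h3 : w ^ (p / 2 - r) = w ^ (p / 2 - r + 1) * w⁻¹ := by
    rw [← Real.rpow_neg_one w, ← Real.rpow_add hw]; ring_nf
  rw [h3]
  apply mul_le_mul_of_nonneg_right ?_ (by positivity)
  have h4 : w ^ (p / 2 - r + 1) ≤ (c ^ 2) ^ (p / 2 - r + 1) := by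
    apply Real.rpow_le_rpow_of_nonpos (by positivity) hcw (by linarith)
  refine h4.trans_eq ?_
  rw [← Real.rpow_natCast c 2, ← Real.rpow_mul hc.le]
  ring_nf

lemma coshR_pos {x y z : ℝ} (hz : 0 < z) : 0 < coshR x y z := by
  unfold coshR; positivity

lemma measurableSet_ngon (n : ℕ) (ρ : ℝ) : MeasurableSet (ngon n ρ) := by
  have : ngon n ρ = ⋂ k : Fin n, {p : ℝ × ℝ |
      Real.cos ((2 * π * k + π) / n) * p.1 + Real.sin ((2 * π * k + π) / n) * p.2
        ≤ ρ * Real.cos (π / n)} := by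
    ext p; simp [ngon, Set.mem_iInter]
  rw [this]
  refine MeasurableSet.iInter fun k => ?_
  have : IsClosed {p : ℝ × ℝ |
      Real.cos ((2 * π * k + π) / n) * p.1 + Real.sin ((2 * π * k + π) / n) * p.2
        ≤ ρ * Real.cos (π / n)} :=
    isClosed_le (by fun_prop) continuous_const
  exact this.measurableSet


def C2 : ℝ := ∫ p : ℝ × ℝ, ((1 : ℝ) + ‖p‖ ^ 2) ^ (-3 / 2 : ℝ)

lemma C2_integrable : Integrable (fun p : ℝ × ℝ => ((1 : ℝ) + ‖p‖ ^ 2) ^ (-3 / 2 : ℝ)) := by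
  have h : ((Module.finrank ℝ (ℝ × ℝ) : ℝ)) < 3 := by
    simp [Module.finrank_prod]
    norm_num
  have := integrable_rpow_neg_one_add_norm_sq (E := ℝ × ℝ) (μ := volume) (r := 3) h
  convert this using 3

lemma C2_nonneg : 0 ≤ C2 :=
  integral_nonneg fun p => Real.rpow_nonneg (by positivity) _

lemma norm_sq_le (p : ℝ × ℝ) : ‖p‖ ^ 2 ≤ p.1 ^ 2 + p.2 ^ 2 := by
  rw [Prod.norm_def]
  rcases max_cases ‖p.1‖ ‖p.2‖ with ⟨h, _⟩ | ⟨h, _⟩ <;> rw [h] <;>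
    simp [Real.norm_eq_abs, sq_abs] <;> nlinarith [sq_nonneg p.1, sq_nonneg p.2]

lemma tendsto_rpow_zero {a : ℝ} (ha : 0 < a) :
    Tendsto (fun ε : ℝ => ε ^ a) (𝓝[>] 0) (𝓝 0) := by
  have h := (Real.continuousAt_rpow_const 0 a (Or.inr ha.le)).tendsto
  rw [Real.zero_rpow ha.ne'] at h
  exact h.mono_left nhdsWithin_le_nhds

lemma sin_div_nonneg {n : ℕ} (hn : 3 ≤ n) : 0 ≤ Real.sin (π / n) := by
  apply Real.sin_nonneg_of_nonneg_of_le_pi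
  · positivity
  · apply div_le_self pi_pos.le
    have : (1:ℕ) ≤ n := by omega
    exact_mod_cast this

lemma baseEdge_bound {τ ε ρ : ℝ} (hτ : 3 / 2 < τ) {n : ℕ} (hn : 3 ≤ n) (hρ : 0 ≤ ρ) (hε : 0 < ε) :
    baseEdgeInt τ n ρ ε ≤ π * 2 ^ (2 * τ - 1) * ε ^ (2 * τ - 2) := by
  have h2ε : (0:ℝ) < 2 * ε := by linarith
  have hL0 : 0 ≤ ρ * Real.sin (π / n) := mul_nonneg hρ (sin_div_nonneg hn)
  set a := ρ * Real.cos (π / n) with ha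
  set L := ρ * Real.sin (π / n) with hL
  set f : ℝ → ℝ := fun y => coshR a y ε ^ (-2 * τ + 1) * ε⁻¹ with hf
  set g : ℝ → ℝ := fun y => ((2 * ε) ^ (2 * τ - 1) * ε⁻¹) * ((1:ℝ) ^ 2 + y ^ 2)⁻¹ with hg
  have hfc : Continuous f := by
    apply Continuous.mul ?_ continuous_const
    apply Continuous.rpow_const ?_ (fun y => Or.inl (coshR_pos hε).ne')
    unfold coshR
    fun_prop
  have hgc : Continuous g := by
    apply Continuous.mul continuous_const
    exact ((continuous_const.add (continuous_pow 2)).inv₀ (fun y => by simp only [Pi.add_apply]; positivity))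
  have hpt : ∀ y : ℝ, f y ≤ g y := by
    intro y
    have hb : (0:ℝ) < 1 + y ^ 2 := by positivity
    have h1 : (1 + y ^ 2) / (2 * ε) ≤ coshR a y ε := by
      unfold coshR
      apply (div_le_div_iff_of_pos_right h2ε).mpr
      nlinarith [sq_nonneg a, sq_nonneg ε]
    have h2 : coshR a y ε ^ (-2 * τ + 1) ≤ ((1 + y ^ 2) / (2 * ε)) ^ (-2 * τ + 1) :=
      Real.rpow_le_rpow_of_nonpos (by positivity) h1 (by linarith)
    have h3 : ((1 + y ^ 2) / (2 * ε)) ^ (-2 * τ + 1)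
        = (2 * ε) ^ (2 * τ - 1) * (1 + y ^ 2) ^ (-2 * τ + 1) := by
      rw [Real.div_rpow hb.le h2ε.le, div_eq_mul_inv, ← Real.rpow_neg h2ε.le]
      rw [show -(-2 * τ + 1) = 2 * τ - 1 by ring, mul_comm]
    have h4 : (1 + y ^ 2) ^ (-2 * τ + 1) ≤ (1 + y ^ 2)⁻¹ := by
      rw [← Real.rpow_neg_one (1 + y ^ 2)]
      exact Real.rpow_le_rpow_of_exponent_le (by nlinarith) (by linarith)
    calc f y = coshR a y ε ^ (-2 * τ + 1) * ε⁻¹ := rfl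
      _ ≤ ((1 + y ^ 2) / (2 * ε)) ^ (-2 * τ + 1) * ε⁻¹ :=
          mul_le_mul_of_nonneg_right h2 (by positivity)
      _ = (2 * ε) ^ (2 * τ - 1) * (1 + y ^ 2) ^ (-2 * τ + 1) * ε⁻¹ := by rw [h3]
      _ ≤ (2 * ε) ^ (2 * τ - 1) * (1 + y ^ 2)⁻¹ * ε⁻¹ := by
          have := Real.rpow_nonneg h2ε.le (2 * τ - 1)
          exact mul_le_mul_of_nonneg_right (mul_le_mul_of_nonneg_left h4 this) (by positivity)
      _ = g y := by rw [hg]; norm_num; ring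
  have hLL : -L ≤ L := by linarith
  have step1 : baseEdgeInt τ n ρ ε ≤ ∫ y in (-L)..L, g y := by
    unfold baseEdgeInt
    exact intervalIntegral.integral_mono_on hLL (hfc.intervalIntegrable _ _)
      (hgc.intervalIntegrable _ _) (fun y _ => hpt y)
  have step2 : (∫ y in (-L)..L, g y) ≤ (2 * ε) ^ (2 * τ - 1) * ε⁻¹ * (π / 1) := by
    rw [hg, intervalIntegral.integral_const_mul]
    apply mul_le_mul_of_nonneg_left (integral_inv_sq_add_sq_le one_pos _ _)
    positivity
  refine step1.trans (step2.trans_eq ?_)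
  rw [Real.mul_rpow (by norm_num) hε.le, ← Real.rpow_neg_one ε, div_one,
    show (2:ℝ) ^ (2 * τ - 1) * ε ^ (2 * τ - 1) * ε ^ (-1:ℝ) * π
    = π * 2 ^ (2 * τ - 1) * (ε ^ (2 * τ - 1) * ε ^ (-1:ℝ)) by ring, ← Real.rpow_add hε,
    show (2 * τ - 1) + -1 = 2 * τ - 2 by ring]

lemma baseFace_bound {τ ε : ℝ} (hτ : 3 / 2 < τ) (n : ℕ) (ρ : ℝ) (hε : 0 < ε) :
    baseFaceInt τ n ρ ε ≤ 2 ^ (2 * τ - 1) * C2 * ε ^ (2 * τ - 3) := by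
  have h2ε : (0:ℝ) < 2 * ε := by linarith
  set M : ℝ × ℝ → ℝ :=
    fun p => (2 * ε) ^ (2 * τ - 1) * (ε ^ 2)⁻¹ * ((1 : ℝ) + ‖p‖ ^ 2) ^ (-3 / 2 : ℝ) with hMdef
  have hM : Integrable M := by
    have := C2_integrable.const_mul ((2 * ε) ^ (2 * τ - 1) * (ε ^ 2)⁻¹)
    exact this.congr (Eventually.of_forall fun p => by rw [hMdef])
  have hpt : ∀ p : ℝ × ℝ, coshR p.1 p.2 ε ^ (-2 * τ + 1) * (ε ^ 2)⁻¹ ≤ M p := by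
    intro p
    have hb : (0:ℝ) < 1 + ‖p‖ ^ 2 := by positivity
    have h1 : (1 + ‖p‖ ^ 2) / (2 * ε) ≤ coshR p.1 p.2 ε := by
      unfold coshR
      apply (div_le_div_iff_of_pos_right h2ε).mpr
      nlinarith [norm_sq_le p, sq_nonneg ε]
    have h2 : coshR p.1 p.2 ε ^ (-2 * τ + 1) ≤ ((1 + ‖p‖ ^ 2) / (2 * ε)) ^ (-2 * τ + 1) :=
      Real.rpow_le_rpow_of_nonpos (by positivity) h1 (by linarith)
    have h3 : ((1 + ‖p‖ ^ 2) / (2 * ε)) ^ (-2 * τ + 1)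
        = (2 * ε) ^ (2 * τ - 1) * (1 + ‖p‖ ^ 2) ^ (-2 * τ + 1) := by
      rw [Real.div_rpow hb.le h2ε.le, div_eq_mul_inv, ← Real.rpow_neg h2ε.le]
      rw [show -(-2 * τ + 1) = 2 * τ - 1 by ring, mul_comm]
    have h4 : (1 + ‖p‖ ^ 2) ^ (-2 * τ + 1) ≤ (1 + ‖p‖ ^ 2) ^ (-3 / 2 : ℝ) :=
      Real.rpow_le_rpow_of_exponent_le (by nlinarith [sq_nonneg ‖p‖]) (by linarith)
    calc coshR p.1 p.2 ε ^ (-2 * τ + 1) * (ε ^ 2)⁻¹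
        ≤ ((1 + ‖p‖ ^ 2) / (2 * ε)) ^ (-2 * τ + 1) * (ε ^ 2)⁻¹ := by
          apply mul_le_mul_of_nonneg_right h2 (by positivity)
      _ = (2 * ε) ^ (2 * τ - 1) * (1 + ‖p‖ ^ 2) ^ (-2 * τ + 1) * (ε ^ 2)⁻¹ := by rw [h3]
      _ ≤ (2 * ε) ^ (2 * τ - 1) * (1 + ‖p‖ ^ 2) ^ (-3 / 2 : ℝ) * (ε ^ 2)⁻¹ := by
          have ha : (0:ℝ) ≤ (2 * ε) ^ (2 * τ - 1) := Real.rpow_nonneg h2ε.le _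
          have hb2 : (0:ℝ) ≤ (ε ^ 2)⁻¹ := by positivity
          exact mul_le_mul_of_nonneg_right (mul_le_mul_of_nonneg_left h4 ha) hb2
      _ = M p := by rw [hMdef]; ring
  have hrhs : (0:ℝ) ≤ 2 ^ (2 * τ - 1) * C2 * ε ^ (2 * τ - 3) := by
    have h := C2_nonneg
    have h1 : (0:ℝ) ≤ (2:ℝ) ^ (2 * τ - 1) := Real.rpow_nonneg (by norm_num) _
    have h2 : (0:ℝ) ≤ ε ^ (2 * τ - 3) := Real.rpow_nonneg hε.le _
    positivity
  unfold baseFaceInt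
  by_cases hf : IntegrableOn
      (fun p : ℝ × ℝ => coshR p.1 p.2 ε ^ (-2 * τ + 1) * (ε ^ 2)⁻¹) (ngon n ρ) volume
  · have key : (2 * ε) ^ (2 * τ - 1) * (ε ^ 2)⁻¹ * C2
        = 2 ^ (2 * τ - 1) * C2 * ε ^ (2 * τ - 3) := by
      rw [Real.mul_rpow (by norm_num) hε.le]
      have : (ε ^ 2)⁻¹ = ε ^ (-2 : ℝ) := by
        rw [← Real.rpow_natCast ε 2, ← Real.rpow_neg hε.le]
        norm_num
      rw [this, show (2:ℝ) ^ (2*τ-1) * ε ^ (2*τ-1) * ε ^ (-2:ℝ) * C2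
          = 2 ^ (2*τ-1) * C2 * (ε ^ (2*τ-1) * ε ^ (-2:ℝ)) by ring,
        ← Real.rpow_add hε, show (2 * τ - 1) + -2 = 2 * τ - 3 by ring]
    calc (∫ p in ngon n ρ, coshR p.1 p.2 ε ^ (-2 * τ + 1) * (ε ^ 2)⁻¹)
        ≤ ∫ p in ngon n ρ, M p :=
          setIntegral_mono_on hf hM.integrableOn (measurableSet_ngon n ρ) fun p _ => hpt p
      _ ≤ ∫ p, M p := setIntegral_le_integral hM
          (Eventually.of_forall fun p => by rw [hMdef]; positivity)
      _ = (2 * ε) ^ (2 * τ - 1) * (ε ^ 2)⁻¹ * C2 := by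
          rw [hMdef, MeasureTheory.integral_const_mul]
          rfl
      _ = _ := key
  · rw [MeasureTheory.integral_undef hf]
    exact hrhs

lemma div_two_rpow {x : ℝ} (a : ℝ) (hx : 0 < x) : (x / 2) ^ a = x ^ a * 2 ^ (-a) := by
  rw [div_eq_mul_inv, Real.mul_rpow hx.le (by norm_num), Real.inv_rpow (by norm_num),
    ← Real.rpow_neg (by norm_num)]

lemma slantEdge_bound {τ ε ρ : ℝ} (hτ : 3 / 2 < τ) (hρ : 1 ≤ ρ) (hε : 0 < ε)
    (hε2 : ε ≤ 1 / 2) :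
    slantEdgeInt τ ρ ε ≤ (1 + 2 * ε * ρ) * ((π + 2) ^ 2 * 2 ^ (3 * (2 * τ - 1) + 1)) *
      (ρ ^ (-(2 * τ - 1)) + ε ^ (2 * τ - 1)) := by
  have hρ0 : (0:ℝ) < ρ := by linarith
  have h2ε : (0:ℝ) < 2 * ε := by linarith
  have hc0 : (0:ℝ) < ρ / 2 := by linarith
  have hd : (0:ℝ) < 1 - ε ^ 2 := by nlinarith
  set m : ℝ := (2 * ε)⁻¹ with hm
  have hm0 : (0:ℝ) < m := by rw [hm]; positivity
  have hεm : ε ≤ m := by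
    rw [hm, inv_eq_one_div, le_div_iff₀ h2ε]; nlinarith
  have hmε : m ≤ ε⁻¹ := by
    rw [hm, inv_eq_one_div, inv_eq_one_div]
    exact one_div_le_one_div_of_le hε (by linarith)
  have hεinv : ε ≤ ε⁻¹ := hεm.trans hmε
  set F : ℝ := Real.sqrt (1 + ε ^ 2 * ρ ^ 2 / (1 - ε ^ 2) ^ 2) with hFdef
  have hF0 : 0 ≤ F := by rw [hFdef]; exact Real.sqrt_nonneg _
  have hFle : F ≤ 1 + 2 * ε * ρ := by
    have hA0 : 0 ≤ ε * ρ / (1 - ε ^ 2) := by positivity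
    have e1 : 1 + ε ^ 2 * ρ ^ 2 / (1 - ε ^ 2) ^ 2 = 1 + (ε * ρ / (1 - ε ^ 2)) ^ 2 := by
      rw [div_pow, mul_pow]
    have h1 : F ≤ 1 + ε * ρ / (1 - ε ^ 2) := by
      rw [hFdef, e1]; exact sqrt_one_add_sq_le hA0
    have h2 : ε * ρ / (1 - ε ^ 2) ≤ 2 * ε * ρ := by
      rw [div_le_iff₀ hd]
      have k1 : (0:ℝ) ≤ 1 - 2 * ε ^ 2 := by nlinarith
      nlinarith [mul_nonneg (mul_nonneg hε.le hρ0.le) k1]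
    linarith
  have hF1 : (0:ℝ) ≤ 1 + 2 * ε * ρ := by nlinarith
  set g : ℝ → ℝ :=
    fun z => coshR 0 (edgeProfile ε ρ z) z ^ (-2 * τ + 1) * z⁻¹ * F with hgdef
  have hξ0 : ∀ z ∈ Set.Icc ε ε⁻¹, 0 ≤ edgeProfile ε ρ z := by
    intro z hz
    have h1 : ε * z ≤ 1 := by
      calc ε * z ≤ ε * ε⁻¹ := mul_le_mul_of_nonneg_left hz.2 hε.le
        _ = 1 := mul_inv_cancel₀ hε.ne'
    exact div_nonneg (mul_nonneg hρ0.le (by linarith)) hd.le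
  have hξhalf : ∀ z ∈ Set.Icc ε m, ρ / 2 ≤ edgeProfile ε ρ z := by
    intro z hz
    have hez : ε * z ≤ 1 / 2 := by
      calc ε * z ≤ ε * m := mul_le_mul_of_nonneg_left hz.2 hε.le
        _ = 1 / 2 := by rw [hm]; field_simp
    have h1 : ρ / 2 ≤ ρ * (1 - ε * z) := by nlinarith
    have h2 : ρ * (1 - ε * z) ≤ ρ * (1 - ε * z) / (1 - ε ^ 2) := by
      rw [le_div_iff₀ hd]
      have hnn : 0 ≤ ρ * (1 - ε * z) := by nlinarith
      nlinarith
    unfold edgeProfile; linarith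
  have hK0 : (0:ℝ) ≤ (π + 2) ^ 2 * 2 ^ (3 * (2 * τ - 1) + 1) :=
    mul_nonneg (sq_nonneg _) (Real.rpow_nonneg (by norm_num) _)
  have hrpow0 : (0:ℝ) ≤ ρ ^ (-(2 * τ - 1)) := Real.rpow_nonneg hρ0.le _
  have hepow0 : (0:ℝ) ≤ ε ^ (2 * τ - 1) := Real.rpow_nonneg hε.le _
  have hrhs0 : (0:ℝ) ≤ (1 + 2 * ε * ρ) * ((π + 2) ^ 2 * 2 ^ (3 * (2 * τ - 1) + 1)) *
      (ρ ^ (-(2 * τ - 1)) + ε ^ (2 * τ - 1)) :=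
    mul_nonneg (mul_nonneg hF1 hK0) (by linarith)
  have hslant : slantEdgeInt τ ρ ε = ∫ z in ε..ε⁻¹, g z := rfl
  rw [hslant]
  by_cases hint : IntervalIntegrable g volume ε ε⁻¹
  case neg =>
    rw [intervalIntegral.integral_undef hint]; exact hrhs0
  case pos =>
  have hsub1 : Set.uIcc ε m ⊆ Set.uIcc ε ε⁻¹ := by
    rw [Set.uIcc_of_le hεm, Set.uIcc_of_le hεinv]
    exact Set.Icc_subset_Icc le_rfl hmε
  have hsub2 : Set.uIcc m ε⁻¹ ⊆ Set.uIcc ε ε⁻¹ := by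
    rw [Set.uIcc_of_le hmε, Set.uIcc_of_le hεinv]
    exact Set.Icc_subset_Icc hεm le_rfl
  have h1 : IntervalIntegrable g volume ε m := hint.mono_set hsub1
  have h2 : IntervalIntegrable g volume m ε⁻¹ := hint.mono_set hsub2
  rw [← intervalIntegral.integral_add_adjacent_intervals h1 h2]
  set G1 : ℝ → ℝ := fun z =>
    (F * 2 ^ (2 * τ - 1) * (ρ / 2) ^ (2 - 2 * τ)) * ((ρ / 2) ^ 2 + z ^ 2)⁻¹ with hG1def
  have hG1c : Continuous G1 := by
    rw [hG1def]
    apply Continuous.mul continuous_const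
    exact ((continuous_const.add (continuous_pow 2)).inv₀ (fun z => by simp only [Pi.add_apply]; positivity))
  have hpt1 : ∀ z ∈ Set.Icc ε m, g z ≤ G1 z := by
    intro z hz
    have hz0 : 0 < z := lt_of_lt_of_le hε hz.1
    have hξ : ρ / 2 ≤ edgeProfile ε ρ z := hξhalf z hz
    have hξnn : 0 ≤ edgeProfile ε ρ z := by linarith
    have hw0 : (0:ℝ) < (ρ / 2) ^ 2 + z ^ 2 := by positivity
    have hcw : (ρ / 2) ^ 2 ≤ (ρ / 2) ^ 2 + z ^ 2 := le_add_of_nonneg_right (sq_nonneg z)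
    have hzw : z ^ 2 ≤ (ρ / 2) ^ 2 + z ^ 2 := le_add_of_nonneg_left (sq_nonneg _)
    have hcosh : ((ρ / 2) ^ 2 + z ^ 2) / (2 * z) ≤ coshR 0 (edgeProfile ε ρ z) z := by
      unfold coshR
      apply (div_le_div_iff_of_pos_right (by linarith)).mpr
      have hsq : (ρ / 2) ^ 2 ≤ (edgeProfile ε ρ z) ^ 2 := by nlinarith
      nlinarith
    have hch0 : (0:ℝ) < ((ρ / 2) ^ 2 + z ^ 2) / (2 * z) := by positivity
    have hb1 : coshR 0 (edgeProfile ε ρ z) z ^ (-2 * τ + 1)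
        ≤ (((ρ / 2) ^ 2 + z ^ 2) / (2 * z)) ^ (-2 * τ + 1) :=
      Real.rpow_le_rpow_of_nonpos hch0 hcosh (by linarith)
    have hb2 : (((ρ / 2) ^ 2 + z ^ 2) / (2 * z)) ^ (-2 * τ + 1) * z⁻¹
        = 2 ^ (2 * τ - 1) * (z ^ (2 * τ - 2) * ((ρ / 2) ^ 2 + z ^ 2) ^ (-(2 * τ - 1))) := by
      rw [show (-2 * τ + 1) = -(2 * τ - 1) by ring,
        Real.div_rpow hw0.le (by linarith : (0:ℝ) ≤ 2 * z), div_eq_mul_inv,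
        ← Real.rpow_neg (by linarith : (0:ℝ) ≤ 2 * z), neg_neg,
        Real.mul_rpow (by norm_num) hz0.le, ← Real.rpow_neg_one z,
        show ((ρ / 2) ^ 2 + z ^ 2) ^ (-(2 * τ - 1)) * (2 ^ (2 * τ - 1) * z ^ (2 * τ - 1)) * z ^ (-1:ℝ)
          = 2 ^ (2 * τ - 1) * ((z ^ (2 * τ - 1) * z ^ (-1:ℝ)) * ((ρ / 2) ^ 2 + z ^ 2) ^ (-(2 * τ - 1))) by ring,
        ← Real.rpow_add hz0, show (2 * τ - 1) + -1 = 2 * τ - 2 by ring]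
    have hb3 : z ^ (2 * τ - 2) * ((ρ / 2) ^ 2 + z ^ 2) ^ (-(2 * τ - 1))
        ≤ (ρ / 2) ^ (2 - 2 * τ) * ((ρ / 2) ^ 2 + z ^ 2)⁻¹ := by
      have hk := key_bound (c := ρ / 2) (z := z) (w := (ρ / 2) ^ 2 + z ^ 2)
        (2 * τ - 2) (2 * τ - 1) hc0 hz0.le (by linarith) (by linarith) hzw hcw
      rwa [show (2 * τ - 2) - 2 * (2 * τ - 1) + 2 = 2 - 2 * τ by ring] at hk
    calc g z = coshR 0 (edgeProfile ε ρ z) z ^ (-2 * τ + 1) * z⁻¹ * F := rfl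
      _ ≤ (((ρ / 2) ^ 2 + z ^ 2) / (2 * z)) ^ (-2 * τ + 1) * z⁻¹ * F :=
          mul_le_mul_of_nonneg_right (mul_le_mul_of_nonneg_right hb1 (by positivity)) hF0
      _ = 2 ^ (2 * τ - 1) * (z ^ (2 * τ - 2) * ((ρ / 2) ^ 2 + z ^ 2) ^ (-(2 * τ - 1))) * F := by
          rw [hb2]
      _ ≤ 2 ^ (2 * τ - 1) * ((ρ / 2) ^ (2 - 2 * τ) * ((ρ / 2) ^ 2 + z ^ 2)⁻¹) * F :=
          mul_le_mul_of_nonneg_right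
            (mul_le_mul_of_nonneg_left hb3 (Real.rpow_nonneg (by norm_num) _)) hF0
      _ = G1 z := by rw [hG1def]; ring
  have hG1nn : (0:ℝ) ≤ F * 2 ^ (2 * τ - 1) * (ρ / 2) ^ (2 - 2 * τ) :=
    mul_nonneg (mul_nonneg hF0 (Real.rpow_nonneg (by norm_num) _)) (Real.rpow_nonneg hc0.le _)
  have hi1 : (∫ z in ε..m, g z)
      ≤ F * 2 ^ (2 * τ - 1) * (ρ / 2) ^ (2 - 2 * τ) * (π / (ρ / 2)) := by
    calc (∫ z in ε..m, g z) ≤ ∫ z in ε..m, G1 z :=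
          intervalIntegral.integral_mono_on hεm h1 (hG1c.intervalIntegrable _ _) hpt1
      _ = (F * 2 ^ (2 * τ - 1) * (ρ / 2) ^ (2 - 2 * τ)) *
            ∫ z in ε..m, ((ρ / 2) ^ 2 + z ^ 2)⁻¹ := by
          rw [hG1def, intervalIntegral.integral_const_mul]
      _ ≤ _ := mul_le_mul_of_nonneg_left (integral_inv_sq_add_sq_le hc0 _ _) hG1nn
  have hpt2 : ∀ z ∈ Set.Icc m ε⁻¹, g z ≤ F * (2 ^ (2 * τ - 1) * (2 * ε) ^ (2 * τ)) := by
    intro z hz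
    have hz0 : 0 < z := lt_of_lt_of_le hm0 hz.1
    have hξnn : 0 ≤ edgeProfile ε ρ z := hξ0 z ⟨le_trans hεm hz.1, hz.2⟩
    have hcosh : z ^ 2 / (2 * z) ≤ coshR 0 (edgeProfile ε ρ z) z := by
      unfold coshR
      apply (div_le_div_iff_of_pos_right (by linarith)).mpr
      nlinarith [sq_nonneg (edgeProfile ε ρ z)]
    have hch0 : (0:ℝ) < z ^ 2 / (2 * z) := by positivity
    have hb1 : coshR 0 (edgeProfile ε ρ z) z ^ (-2 * τ + 1)
        ≤ (z ^ 2 / (2 * z)) ^ (-2 * τ + 1) :=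
      Real.rpow_le_rpow_of_nonpos hch0 hcosh (by linarith)
    have hb2 : (z ^ 2 / (2 * z)) ^ (-2 * τ + 1) * z⁻¹ = 2 ^ (2 * τ - 1) * z ^ (-(2 * τ)) := by
      rw [show (-2 * τ + 1) = -(2 * τ - 1) by ring,
        Real.div_rpow (by positivity) (by linarith : (0:ℝ) ≤ 2 * z), div_eq_mul_inv,
        ← Real.rpow_neg (by linarith : (0:ℝ) ≤ 2 * z), neg_neg,
        Real.mul_rpow (by norm_num) hz0.le, ← Real.rpow_neg_one z,
        ← Real.rpow_natCast z 2, ← Real.rpow_mul hz0.le,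
        show ((2:ℕ) : ℝ) * -(2 * τ - 1) = -(4 * τ - 2) by push_cast; ring,
        show z ^ (-(4 * τ - 2)) * (2 ^ (2 * τ - 1) * z ^ (2 * τ - 1)) * z ^ (-1:ℝ)
          = 2 ^ (2 * τ - 1) * (z ^ (-(4 * τ - 2)) * z ^ (2 * τ - 1) * z ^ (-1:ℝ)) by ring,
        ← Real.rpow_add hz0, ← Real.rpow_add hz0,
        show -(4 * τ - 2) + (2 * τ - 1) + -1 = -(2 * τ) by ring]
    have hb3 : z ^ (-(2 * τ)) ≤ (2 * ε) ^ (2 * τ) := by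
      have k1 : z ^ (-(2 * τ)) ≤ m ^ (-(2 * τ)) :=
        Real.rpow_le_rpow_of_nonpos hm0 hz.1 (by linarith)
      have k2 : m ^ (-(2 * τ)) = (2 * ε) ^ (2 * τ) := by
        rw [hm, Real.inv_rpow h2ε.le, ← Real.rpow_neg h2ε.le, neg_neg]
      linarith
    calc g z = coshR 0 (edgeProfile ε ρ z) z ^ (-2 * τ + 1) * z⁻¹ * F := rfl
      _ ≤ (z ^ 2 / (2 * z)) ^ (-2 * τ + 1) * z⁻¹ * F :=
          mul_le_mul_of_nonneg_right (mul_le_mul_of_nonneg_right hb1 (by positivity)) hF0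
      _ = 2 ^ (2 * τ - 1) * z ^ (-(2 * τ)) * F := by rw [hb2]
      _ ≤ 2 ^ (2 * τ - 1) * (2 * ε) ^ (2 * τ) * F :=
          mul_le_mul_of_nonneg_right
            (mul_le_mul_of_nonneg_left hb3 (Real.rpow_nonneg (by norm_num) _)) hF0
      _ = F * (2 ^ (2 * τ - 1) * (2 * ε) ^ (2 * τ)) := by ring
  have hconst : (0:ℝ) ≤ F * (2 ^ (2 * τ - 1) * (2 * ε) ^ (2 * τ)) :=
    mul_nonneg hF0
      (mul_nonneg (Real.rpow_nonneg (by norm_num) _) (Real.rpow_nonneg h2ε.le _))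
  have hi2 : (∫ z in m..ε⁻¹, g z) ≤ ε⁻¹ * (F * (2 ^ (2 * τ - 1) * (2 * ε) ^ (2 * τ))) := by
    calc (∫ z in m..ε⁻¹, g z)
        ≤ ∫ _ in m..ε⁻¹, F * (2 ^ (2 * τ - 1) * (2 * ε) ^ (2 * τ)) :=
          intervalIntegral.integral_mono_on hmε h2 intervalIntegrable_const hpt2
      _ = (ε⁻¹ - m) * (F * (2 ^ (2 * τ - 1) * (2 * ε) ^ (2 * τ))) := by
          rw [intervalIntegral.integral_const, smul_eq_mul]
      _ ≤ ε⁻¹ * (F * (2 ^ (2 * τ - 1) * (2 * ε) ^ (2 * τ))) :=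
          mul_le_mul_of_nonneg_right (by linarith) hconst
  -- arithmetic for piece 1
  have t1 : F * 2 ^ (2 * τ - 1) * (ρ / 2) ^ (2 - 2 * τ) * (π / (ρ / 2))
      ≤ (1 + 2 * ε * ρ) * ((π + 2) ^ 2 * 2 ^ (3 * (2 * τ - 1) + 1)) * ρ ^ (-(2 * τ - 1)) := by
    have e1 : F * 2 ^ (2 * τ - 1) * (ρ / 2) ^ (2 - 2 * τ) * (π / (ρ / 2))
        = (π * (2 ^ (2 * τ - 1) * 2 ^ (-(2 - 2 * τ)) * 2 ^ (1:ℝ))) *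
          (ρ ^ (2 - 2 * τ) * ρ ^ (-1:ℝ)) * F := by
      rw [show π / (ρ / 2) = π * (ρ / 2) ^ (-1:ℝ) by rw [Real.rpow_neg_one]; ring,
        div_two_rpow (2 - 2 * τ) hρ0, div_two_rpow (-1:ℝ) hρ0, neg_neg,
        show (2:ℝ) ^ (1:ℝ) = 2 ^ ((1:ℕ):ℝ) by norm_num, Real.rpow_natCast]
      ring
    have e2 : (2:ℝ) ^ (2 * τ - 1) * 2 ^ (-(2 - 2 * τ)) * 2 ^ (1:ℝ) = 2 ^ (4 * τ - 2) := by
      rw [← Real.rpow_add two_pos, ← Real.rpow_add two_pos,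
        show (2 * τ - 1) + -(2 - 2 * τ) + 1 = 4 * τ - 2 by ring]
    have e3 : ρ ^ (2 - 2 * τ) * ρ ^ (-1:ℝ) = ρ ^ (-(2 * τ - 1)) := by
      rw [← Real.rpow_add hρ0, show (2 - 2 * τ) + -1 = -(2 * τ - 1) by ring]
    rw [e1, e2, e3]
    have k1 : (π:ℝ) ≤ (π + 2) ^ 2 := by nlinarith [pi_pos]
    have k2 : (2:ℝ) ^ (4 * τ - 2) ≤ 2 ^ (3 * (2 * τ - 1) + 1) :=
      Real.rpow_le_rpow_of_exponent_le one_le_two (by linarith)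
    have k3 : π * 2 ^ (4 * τ - 2) ≤ (π + 2) ^ 2 * 2 ^ (3 * (2 * τ - 1) + 1) :=
      mul_le_mul k1 k2 (Real.rpow_nonneg (by norm_num) _) (by positivity)
    calc π * 2 ^ (4 * τ - 2) * ρ ^ (-(2 * τ - 1)) * F
        ≤ π * 2 ^ (4 * τ - 2) * ρ ^ (-(2 * τ - 1)) * (1 + 2 * ε * ρ) :=
          mul_le_mul_of_nonneg_left hFle
            (by positivity)
      _ ≤ ((π + 2) ^ 2 * 2 ^ (3 * (2 * τ - 1) + 1)) * ρ ^ (-(2 * τ - 1)) * (1 + 2 * ε * ρ) :=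
          mul_le_mul_of_nonneg_right (mul_le_mul_of_nonneg_right k3 hrpow0) hF1
      _ = (1 + 2 * ε * ρ) * ((π + 2) ^ 2 * 2 ^ (3 * (2 * τ - 1) + 1)) * ρ ^ (-(2 * τ - 1)) := by
          ring
  -- arithmetic for piece 2
  have t2 : ε⁻¹ * (F * (2 ^ (2 * τ - 1) * (2 * ε) ^ (2 * τ)))
      ≤ (1 + 2 * ε * ρ) * ((π + 2) ^ 2 * 2 ^ (3 * (2 * τ - 1) + 1)) * ε ^ (2 * τ - 1) := by
    have e1 : ε⁻¹ * (F * (2 ^ (2 * τ - 1) * (2 * ε) ^ (2 * τ)))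
        = (2 ^ (2 * τ - 1) * 2 ^ (2 * τ)) * (ε ^ (2 * τ) * ε ^ (-1:ℝ)) * F := by
      rw [Real.mul_rpow (by norm_num : (0:ℝ) ≤ 2) hε.le, ← Real.rpow_neg_one ε]
      ring
    have e2 : (2:ℝ) ^ (2 * τ - 1) * 2 ^ (2 * τ) = 2 ^ (4 * τ - 1) := by
      rw [← Real.rpow_add two_pos, show (2 * τ - 1) + 2 * τ = 4 * τ - 1 by ring]
    have e3 : ε ^ (2 * τ) * ε ^ (-1:ℝ) = ε ^ (2 * τ - 1) := by
      rw [← Real.rpow_add hε, show 2 * τ + -1 = 2 * τ - 1 by ring]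
    rw [e1, e2, e3]
    have k1 : (1:ℝ) ≤ (π + 2) ^ 2 := by nlinarith [pi_pos]
    have k2 : (2:ℝ) ^ (4 * τ - 1) ≤ 2 ^ (3 * (2 * τ - 1) + 1) :=
      Real.rpow_le_rpow_of_exponent_le one_le_two (by linarith)
    have k3 : (2:ℝ) ^ (4 * τ - 1) ≤ (π + 2) ^ 2 * 2 ^ (3 * (2 * τ - 1) + 1) := by
      calc (2:ℝ) ^ (4 * τ - 1) = 1 * 2 ^ (4 * τ - 1) := by ring
        _ ≤ (π + 2) ^ 2 * 2 ^ (3 * (2 * τ - 1) + 1) :=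
          mul_le_mul k1 k2 (Real.rpow_nonneg (by norm_num) _) (by positivity)
    calc 2 ^ (4 * τ - 1) * ε ^ (2 * τ - 1) * F
        ≤ 2 ^ (4 * τ - 1) * ε ^ (2 * τ - 1) * (1 + 2 * ε * ρ) :=
          mul_le_mul_of_nonneg_left hFle (by positivity)
      _ ≤ ((π + 2) ^ 2 * 2 ^ (3 * (2 * τ - 1) + 1)) * ε ^ (2 * τ - 1) * (1 + 2 * ε * ρ) :=
          mul_le_mul_of_nonneg_right (mul_le_mul_of_nonneg_right k3 hepow0) hF1
      _ = (1 + 2 * ε * ρ) * ((π + 2) ^ 2 * 2 ^ (3 * (2 * τ - 1) + 1)) * ε ^ (2 * τ - 1) := by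
          ring
  calc (∫ z in ε..m, g z) + (∫ z in m..ε⁻¹, g z)
      ≤ (F * 2 ^ (2 * τ - 1) * (ρ / 2) ^ (2 - 2 * τ) * (π / (ρ / 2))) +
        (ε⁻¹ * (F * (2 ^ (2 * τ - 1) * (2 * ε) ^ (2 * τ)))) := add_le_add hi1 hi2
    _ ≤ (1 + 2 * ε * ρ) * ((π + 2) ^ 2 * 2 ^ (3 * (2 * τ - 1) + 1)) * ρ ^ (-(2 * τ - 1)) +
        (1 + 2 * ε * ρ) * ((π + 2) ^ 2 * 2 ^ (3 * (2 * τ - 1) + 1)) * ε ^ (2 * τ - 1) :=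
          add_le_add t1 t2
    _ = (1 + 2 * ε * ρ) * ((π + 2) ^ 2 * 2 ^ (3 * (2 * τ - 1) + 1)) *
        (ρ ^ (-(2 * τ - 1)) + ε ^ (2 * τ - 1)) := by ring

lemma div_pos_rpow {x d : ℝ} (a : ℝ) (hx : 0 < x) (hd : 0 < d) :
    (x / d) ^ a = x ^ a * d ^ (-a) := by
  rw [div_eq_mul_inv, Real.mul_rpow hx.le (by positivity), Real.inv_rpow hd.le,
    ← Real.rpow_neg hd.le]

set_option maxHeartbeats 1600000 in
lemma sideFace_bound {τ ε ρ : ℝ} (hτ : 3 / 2 < τ) {n : ℕ} (hn : 3 ≤ n) (hρ : 1 ≤ ρ)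
    (hε : 0 < ε) (hε2 : ε ≤ 1 / 2) :
    sideFaceInt τ n ρ ε ≤ (1 + 2 * ε * ρ) * ((π + 2) ^ 2 * 2 ^ (3 * (2 * τ - 1) + 1)) *
      (ρ ^ (-(2 * τ - 1)) + ε ^ (2 * τ - 1)) := by
  have hρ0 : (0:ℝ) < ρ := by linarith
  have h2ε : (0:ℝ) < 2 * ε := by linarith
  have hc0 : (0:ℝ) < ρ / 4 := by linarith
  have hd : (0:ℝ) < 1 - ε ^ 2 := by nlinarith
  have hcosθ : 1 / 2 ≤ Real.cos (π / n) := by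
    have h3 : π / n ≤ π / 3 := by
      apply div_le_div_of_nonneg_left pi_pos.le (by norm_num)
      exact_mod_cast hn
    have := Real.cos_le_cos_of_nonneg_of_le_pi (by positivity) (by linarith [pi_pos]) h3
    rwa [Real.cos_pi_div_three] at this
  have hsinθ : 0 ≤ Real.sin (π / n) := sin_div_nonneg hn
  set m : ℝ := (2 * ε)⁻¹ with hm
  have hm0 : (0:ℝ) < m := by rw [hm]; positivity
  have hεm : ε ≤ m := by
    rw [hm, inv_eq_one_div, le_div_iff₀ h2ε]; nlinarith
  have hmε : m ≤ ε⁻¹ := by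
    rw [hm, inv_eq_one_div, inv_eq_one_div]
    exact one_div_le_one_div_of_le hε (by linarith)
  have hεinv : ε ≤ ε⁻¹ := hεm.trans hmε
  set F : ℝ := Real.sqrt (1 + ε ^ 2 * ρ ^ 2 / (1 - ε ^ 2) ^ 2) with hFdef
  have hF0 : 0 ≤ F := by rw [hFdef]; exact Real.sqrt_nonneg _
  have hFle : F ≤ 1 + 2 * ε * ρ := by
    have hA0 : 0 ≤ ε * ρ / (1 - ε ^ 2) := by positivity
    have e1 : 1 + ε ^ 2 * ρ ^ 2 / (1 - ε ^ 2) ^ 2 = 1 + (ε * ρ / (1 - ε ^ 2)) ^ 2 := by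
      rw [div_pow, mul_pow]
    have h1 : F ≤ 1 + ε * ρ / (1 - ε ^ 2) := by
      rw [hFdef, e1]; exact sqrt_one_add_sq_le hA0
    have h2 : ε * ρ / (1 - ε ^ 2) ≤ 2 * ε * ρ := by
      rw [div_le_iff₀ hd]
      have k1 : (0:ℝ) ≤ 1 - 2 * ε ^ 2 := by nlinarith
      nlinarith [mul_nonneg (mul_nonneg hε.le hρ0.le) k1]
    linarith
  have hF1 : (0:ℝ) ≤ 1 + 2 * ε * ρ := by nlinarith
  set g : ℝ → ℝ := fun z =>
    (∫ y in (-(edgeProfile ε ρ z * Real.sin (π / n)))..(edgeProfile ε ρ z * Real.sin (π / n)),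
      (coshR (edgeProfile ε ρ z * Real.cos (π / n)) y z) ^ (-2 * τ + 1)) *
    (z ^ 2)⁻¹ * F with hgdef
  have hξ0 : ∀ z ∈ Set.Icc ε ε⁻¹, 0 ≤ edgeProfile ε ρ z := by
    intro z hz
    have h1 : ε * z ≤ 1 := by
      calc ε * z ≤ ε * ε⁻¹ := mul_le_mul_of_nonneg_left hz.2 hε.le
        _ = 1 := mul_inv_cancel₀ hε.ne'
    exact div_nonneg (mul_nonneg hρ0.le (by linarith)) hd.le
  have hξhalf : ∀ z ∈ Set.Icc ε m, ρ / 2 ≤ edgeProfile ε ρ z := by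
    intro z hz
    have hez : ε * z ≤ 1 / 2 := by
      calc ε * z ≤ ε * m := mul_le_mul_of_nonneg_left hz.2 hε.le
        _ = 1 / 2 := by rw [hm]; field_simp
    have h1 : ρ / 2 ≤ ρ * (1 - ε * z) := by nlinarith
    have h2 : ρ * (1 - ε * z) ≤ ρ * (1 - ε * z) / (1 - ε ^ 2) := by
      rw [le_div_iff₀ hd]
      have hnn : 0 ≤ ρ * (1 - ε * z) := by nlinarith
      nlinarith
    unfold edgeProfile; linarith
  have hK0 : (0:ℝ) ≤ (π + 2) ^ 2 * 2 ^ (3 * (2 * τ - 1) + 1) :=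
    mul_nonneg (sq_nonneg _) (Real.rpow_nonneg (by norm_num) _)
  have hrpow0 : (0:ℝ) ≤ ρ ^ (-(2 * τ - 1)) := Real.rpow_nonneg hρ0.le _
  have hepow0 : (0:ℝ) ≤ ε ^ (2 * τ - 1) := Real.rpow_nonneg hε.le _
  have hrhs0 : (0:ℝ) ≤ (1 + 2 * ε * ρ) * ((π + 2) ^ 2 * 2 ^ (3 * (2 * τ - 1) + 1)) *
      (ρ ^ (-(2 * τ - 1)) + ε ^ (2 * τ - 1)) :=
    mul_nonneg (mul_nonneg hF1 hK0) (by linarith)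
  have hside : sideFaceInt τ n ρ ε = ∫ z in ε..ε⁻¹, g z := rfl
  rw [hside]
  by_cases hint : IntervalIntegrable g volume ε ε⁻¹
  case neg =>
    rw [intervalIntegral.integral_undef hint]; exact hrhs0
  case pos =>
  have hsub1 : Set.uIcc ε m ⊆ Set.uIcc ε ε⁻¹ := by
    rw [Set.uIcc_of_le hεm, Set.uIcc_of_le hεinv]
    exact Set.Icc_subset_Icc le_rfl hmε
  have hsub2 : Set.uIcc m ε⁻¹ ⊆ Set.uIcc ε ε⁻¹ := by
    rw [Set.uIcc_of_le hmε, Set.uIcc_of_le hεinv]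
    exact Set.Icc_subset_Icc hεm le_rfl
  have h1 : IntervalIntegrable g volume ε m := hint.mono_set hsub1
  have h2 : IntervalIntegrable g volume m ε⁻¹ := hint.mono_set hsub2
  rw [← intervalIntegral.integral_add_adjacent_intervals h1 h2]
  -- inner integral bound, valid for z in [ε, ε⁻¹]
  have hinner : ∀ z ∈ Set.Icc ε ε⁻¹,
      (∫ y in (-(edgeProfile ε ρ z * Real.sin (π / n)))..(edgeProfile ε ρ z * Real.sin (π / n)),
        (coshR (edgeProfile ε ρ z * Real.cos (π / n)) y z) ^ (-2 * τ + 1))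
      ≤ ((2 * z) ^ (2 * τ - 1) *
          ((edgeProfile ε ρ z * Real.cos (π / n)) ^ 2 + z ^ 2 + 1) ^ (-(2 * τ - 2))) *
        (π / Real.sqrt ((edgeProfile ε ρ z * Real.cos (π / n)) ^ 2 + z ^ 2 + 1)) := by
    intro z hz
    have hz0 : 0 < z := lt_of_lt_of_le hε hz.1
    set x0 : ℝ := edgeProfile ε ρ z * Real.cos (π / n) with hx0
    set q : ℝ := x0 ^ 2 + z ^ 2 + 1 with hq
    have hq0 : (0:ℝ) < q := by rw [hq]; positivity
    have hsq0 : 0 < Real.sqrt q := Real.sqrt_pos.mpr hq0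
    have hLnn : 0 ≤ edgeProfile ε ρ z * Real.sin (π / n) :=
      mul_nonneg (hξ0 z hz) hsinθ
    have hLL : -(edgeProfile ε ρ z * Real.sin (π / n)) ≤ edgeProfile ε ρ z * Real.sin (π / n) := by
      linarith
    have hconst0 : (0:ℝ) ≤ (2 * z) ^ (2 * τ - 1) * q ^ (-(2 * τ - 2)) :=
      mul_nonneg (Real.rpow_nonneg (by linarith) _) (Real.rpow_nonneg hq0.le _)
    have hptY : ∀ y : ℝ, coshR x0 y z ^ (-2 * τ + 1)
        ≤ ((2 * z) ^ (2 * τ - 1) * q ^ (-(2 * τ - 2))) * ((Real.sqrt q) ^ 2 + y ^ 2)⁻¹ := by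
      intro y
      have hqy : (0:ℝ) < q + y ^ 2 := by positivity
      have e0 : coshR x0 y z = (q + y ^ 2) / (2 * z) := by
        unfold coshR; rw [hq]; ring_nf
      have e1 : ((q + y ^ 2) / (2 * z)) ^ (-2 * τ + 1)
          = (2 * z) ^ (2 * τ - 1) * (q + y ^ 2) ^ (-(2 * τ - 1)) := by
        rw [show (-2 * τ + 1) = -(2 * τ - 1) by ring,
          Real.div_rpow hqy.le (by linarith : (0:ℝ) ≤ 2 * z), div_eq_mul_inv,
          ← Real.rpow_neg (by linarith : (0:ℝ) ≤ 2 * z), neg_neg, mul_comm]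
      have e2 : (q + y ^ 2) ^ (-(2 * τ - 1))
          = (q + y ^ 2) ^ (-(2 * τ - 2)) * (q + y ^ 2)⁻¹ := by
        rw [← Real.rpow_neg_one (q + y ^ 2), ← Real.rpow_add hqy,
          show -(2 * τ - 2) + -1 = -(2 * τ - 1) by ring]
      have e3 : (q + y ^ 2) ^ (-(2 * τ - 2)) ≤ q ^ (-(2 * τ - 2)) :=
        Real.rpow_le_rpow_of_nonpos hq0 (by nlinarith [sq_nonneg y]) (by linarith)
      have e4 : (Real.sqrt q) ^ 2 + y ^ 2 = q + y ^ 2 := by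
        rw [Real.sq_sqrt hq0.le]
      rw [e0, e1, e2, e4]
      have : (2 * z) ^ (2 * τ - 1) * ((q + y ^ 2) ^ (-(2 * τ - 2)) * (q + y ^ 2)⁻¹)
          ≤ (2 * z) ^ (2 * τ - 1) * (q ^ (-(2 * τ - 2)) * (q + y ^ 2)⁻¹) := by
        apply mul_le_mul_of_nonneg_left ?_ (Real.rpow_nonneg (by linarith) _)
        exact mul_le_mul_of_nonneg_right e3 (by positivity)
      calc (2 * z) ^ (2 * τ - 1) * ((q + y ^ 2) ^ (-(2 * τ - 2)) * (q + y ^ 2)⁻¹)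
          ≤ (2 * z) ^ (2 * τ - 1) * (q ^ (-(2 * τ - 2)) * (q + y ^ 2)⁻¹) := this
        _ = ((2 * z) ^ (2 * τ - 1) * q ^ (-(2 * τ - 2))) * (q + y ^ 2)⁻¹ := by ring
    have hfc : Continuous fun y : ℝ => coshR x0 y z ^ (-2 * τ + 1) := by
      apply Continuous.rpow_const ?_ (fun y => Or.inl (coshR_pos hz0).ne')
      unfold coshR; fun_prop
    have hgc : Continuous fun y : ℝ =>
        ((2 * z) ^ (2 * τ - 1) * q ^ (-(2 * τ - 2))) * ((Real.sqrt q) ^ 2 + y ^ 2)⁻¹ := by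
      apply Continuous.mul continuous_const
      apply Continuous.inv₀ (by fun_prop)
      intro y
      have : (0:ℝ) < (Real.sqrt q) ^ 2 + y ^ 2 := by positivity
      exact this.ne'
    calc (∫ y in (-(edgeProfile ε ρ z * Real.sin (π / n)))..(edgeProfile ε ρ z * Real.sin (π / n)),
          (coshR x0 y z) ^ (-2 * τ + 1))
        ≤ ∫ y in (-(edgeProfile ε ρ z * Real.sin (π / n)))..(edgeProfile ε ρ z * Real.sin (π / n)),
          ((2 * z) ^ (2 * τ - 1) * q ^ (-(2 * τ - 2))) * ((Real.sqrt q) ^ 2 + y ^ 2)⁻¹ :=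
          intervalIntegral.integral_mono_on hLL (hfc.intervalIntegrable _ _)
            (hgc.intervalIntegrable _ _) (fun y _ => hptY y)
      _ = ((2 * z) ^ (2 * τ - 1) * q ^ (-(2 * τ - 2))) *
          ∫ y in (-(edgeProfile ε ρ z * Real.sin (π / n)))..(edgeProfile ε ρ z * Real.sin (π / n)),
            ((Real.sqrt q) ^ 2 + y ^ 2)⁻¹ := intervalIntegral.integral_const_mul _ _
      _ ≤ ((2 * z) ^ (2 * τ - 1) * q ^ (-(2 * τ - 2))) * (π / Real.sqrt q) :=
          mul_le_mul_of_nonneg_left (integral_inv_sq_add_sq_le hsq0 _ _) hconst0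
  -- majorant on [ε, m]
  set G1 : ℝ → ℝ := fun z =>
    (F * (π * 2 ^ (2 * τ - 1)) * (ρ / 4) ^ (2 - 2 * τ)) * ((ρ / 4) ^ 2 + z ^ 2)⁻¹ with hG1def
  have hG1c : Continuous G1 := by
    rw [hG1def]
    apply Continuous.mul continuous_const
    exact ((continuous_const.add (continuous_pow 2)).inv₀ (fun z => by simp only [Pi.add_apply]; positivity))
  have hpt1 : ∀ z ∈ Set.Icc ε m, g z ≤ G1 z := by
    intro z hz
    have hz0 : 0 < z := lt_of_lt_of_le hε hz.1
    have hzI : z ∈ Set.Icc ε ε⁻¹ := ⟨hz.1, hz.2.trans hmε⟩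
    have hI := hinner z hzI
    have hξ : ρ / 2 ≤ edgeProfile ε ρ z := hξhalf z hz
    have hξnn : 0 ≤ edgeProfile ε ρ z := by linarith
    have hx0c : ρ / 4 ≤ edgeProfile ε ρ z * Real.cos (π / n) := by
      calc ρ / 4 = (ρ / 2) * (1 / 2) := by ring
        _ ≤ edgeProfile ε ρ z * Real.cos (π / n) :=
          mul_le_mul hξ hcosθ (by norm_num) hξnn
    have hw0 : (0:ℝ) < (ρ / 4) ^ 2 + z ^ 2 := by positivity
    have hwq : (ρ / 4) ^ 2 + z ^ 2 ≤ (edgeProfile ε ρ z * Real.cos (π / n)) ^ 2 + z ^ 2 + 1 := by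
      have := pow_le_pow_left₀ hc0.le hx0c 2
      linarith
    have hQ0 : (0:ℝ) < (edgeProfile ε ρ z * Real.cos (π / n)) ^ 2 + z ^ 2 + 1 := by positivity
    have hA1 : ((edgeProfile ε ρ z * Real.cos (π / n)) ^ 2 + z ^ 2 + 1) ^ (-(2 * τ - 2))
        ≤ ((ρ / 4) ^ 2 + z ^ 2) ^ (-(2 * τ - 2)) :=
      Real.rpow_le_rpow_of_nonpos hw0 hwq (by linarith)
    have hA2 : π / Real.sqrt ((edgeProfile ε ρ z * Real.cos (π / n)) ^ 2 + z ^ 2 + 1)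
        ≤ π * ((ρ / 4) ^ 2 + z ^ 2) ^ (-(1/2) : ℝ) := by
      have k1 : Real.sqrt ((ρ / 4) ^ 2 + z ^ 2)
          ≤ Real.sqrt ((edgeProfile ε ρ z * Real.cos (π / n)) ^ 2 + z ^ 2 + 1) :=
        Real.sqrt_le_sqrt hwq
      have k2 : (0:ℝ) < Real.sqrt ((ρ / 4) ^ 2 + z ^ 2) := Real.sqrt_pos.mpr hw0
      have k3 : (Real.sqrt ((edgeProfile ε ρ z * Real.cos (π / n)) ^ 2 + z ^ 2 + 1))⁻¹
          ≤ (Real.sqrt ((ρ / 4) ^ 2 + z ^ 2))⁻¹ := by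
        apply inv_anti₀ k2 k1
      have k4 : (Real.sqrt ((ρ / 4) ^ 2 + z ^ 2))⁻¹ = ((ρ / 4) ^ 2 + z ^ 2) ^ (-(1/2) : ℝ) := by
        rw [Real.sqrt_eq_rpow, ← Real.rpow_neg hw0.le]
      rw [div_eq_mul_inv]
      rw [← k4]
      exact mul_le_mul_of_nonneg_left k3 pi_pos.le
    have hIQ0 : (0:ℝ) ≤ (2 * z) ^ (2 * τ - 1) *
        ((edgeProfile ε ρ z * Real.cos (π / n)) ^ 2 + z ^ 2 + 1) ^ (-(2 * τ - 2)) :=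
      mul_nonneg (Real.rpow_nonneg (by linarith) _) (Real.rpow_nonneg hQ0.le _)
    have hB : ((2 * z) ^ (2 * τ - 1) *
          ((edgeProfile ε ρ z * Real.cos (π / n)) ^ 2 + z ^ 2 + 1) ^ (-(2 * τ - 2))) *
        (π / Real.sqrt ((edgeProfile ε ρ z * Real.cos (π / n)) ^ 2 + z ^ 2 + 1))
        ≤ ((2 * z) ^ (2 * τ - 1) * (((ρ / 4) ^ 2 + z ^ 2) ^ (-(2 * τ - 2)))) *
          (π * ((ρ / 4) ^ 2 + z ^ 2) ^ (-(1/2) : ℝ)) := by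
      apply mul_le_mul ?_ hA2 (by positivity) ?_
      · exact mul_le_mul_of_nonneg_left hA1 (Real.rpow_nonneg (by linarith) _)
      · exact mul_nonneg (Real.rpow_nonneg (by linarith) _) (Real.rpow_nonneg hw0.le _)
    have ez2 : (z ^ 2)⁻¹ = z ^ (-2 : ℝ) := by
      rw [← Real.rpow_natCast z 2, ← Real.rpow_neg hz0.le]
      norm_num
    have eC : ((2 * z) ^ (2 * τ - 1) * (((ρ / 4) ^ 2 + z ^ 2) ^ (-(2 * τ - 2)))) *
          (π * ((ρ / 4) ^ 2 + z ^ 2) ^ (-(1/2) : ℝ)) * (z ^ 2)⁻¹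
        = (π * 2 ^ (2 * τ - 1)) *
          (z ^ (2 * τ - 3) * ((ρ / 4) ^ 2 + z ^ 2) ^ (-(2 * τ - 3/2))) := by
      rw [ez2, Real.mul_rpow (by norm_num : (0:ℝ) ≤ 2) hz0.le,
        show (2:ℝ) ^ (2 * τ - 1) * z ^ (2 * τ - 1) * ((ρ / 4) ^ 2 + z ^ 2) ^ (-(2 * τ - 2)) *
          (π * ((ρ / 4) ^ 2 + z ^ 2) ^ (-(1/2) : ℝ)) * z ^ (-2:ℝ)
          = (π * 2 ^ (2 * τ - 1)) * ((z ^ (2 * τ - 1) * z ^ (-2:ℝ)) *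
            (((ρ / 4) ^ 2 + z ^ 2) ^ (-(2 * τ - 2)) * ((ρ / 4) ^ 2 + z ^ 2) ^ (-(1/2) : ℝ))) by ring,
        ← Real.rpow_add hz0, ← Real.rpow_add hw0,
        show (2 * τ - 1) + -2 = 2 * τ - 3 by ring,
        show -(2 * τ - 2) + -(1/2) = -(2 * τ - 3/2) by ring]
    have hKB : z ^ (2 * τ - 3) * ((ρ / 4) ^ 2 + z ^ 2) ^ (-(2 * τ - 3/2))
        ≤ (ρ / 4) ^ (2 - 2 * τ) * ((ρ / 4) ^ 2 + z ^ 2)⁻¹ := by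
      have hk := key_bound (c := ρ / 4) (z := z) (w := (ρ / 4) ^ 2 + z ^ 2)
        (2 * τ - 3) (2 * τ - 3/2) hc0 hz0.le (by linarith) (by linarith)
        (le_add_of_nonneg_left (sq_nonneg _)) (le_add_of_nonneg_right (sq_nonneg z))
      rwa [show (2 * τ - 3) - 2 * (2 * τ - 3/2) + 2 = 2 - 2 * τ by ring] at hk
    calc g z = (∫ y in (-(edgeProfile ε ρ z * Real.sin (π / n)))..(edgeProfile ε ρ z * Real.sin (π / n)),
          (coshR (edgeProfile ε ρ z * Real.cos (π / n)) y z) ^ (-2 * τ + 1)) * (z ^ 2)⁻¹ * F := rfl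
      _ ≤ (((2 * z) ^ (2 * τ - 1) *
            ((edgeProfile ε ρ z * Real.cos (π / n)) ^ 2 + z ^ 2 + 1) ^ (-(2 * τ - 2))) *
          (π / Real.sqrt ((edgeProfile ε ρ z * Real.cos (π / n)) ^ 2 + z ^ 2 + 1))) * (z ^ 2)⁻¹ * F :=
          mul_le_mul_of_nonneg_right (mul_le_mul_of_nonneg_right hI (by positivity)) hF0
      _ ≤ (((2 * z) ^ (2 * τ - 1) * (((ρ / 4) ^ 2 + z ^ 2) ^ (-(2 * τ - 2)))) *
          (π * ((ρ / 4) ^ 2 + z ^ 2) ^ (-(1/2) : ℝ))) * (z ^ 2)⁻¹ * F :=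
          mul_le_mul_of_nonneg_right (mul_le_mul_of_nonneg_right hB (by positivity)) hF0
      _ = (π * 2 ^ (2 * τ - 1)) *
          (z ^ (2 * τ - 3) * ((ρ / 4) ^ 2 + z ^ 2) ^ (-(2 * τ - 3/2))) * F := by rw [eC]
      _ ≤ (π * 2 ^ (2 * τ - 1)) * ((ρ / 4) ^ (2 - 2 * τ) * ((ρ / 4) ^ 2 + z ^ 2)⁻¹) * F := by
          apply mul_le_mul_of_nonneg_right ?_ hF0
          apply mul_le_mul_of_nonneg_left hKB
          positivity
      _ = G1 z := by rw [hG1def]; ring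
  have hG1nn : (0:ℝ) ≤ F * (π * 2 ^ (2 * τ - 1)) * (ρ / 4) ^ (2 - 2 * τ) := by
    apply mul_nonneg (mul_nonneg hF0 (by positivity)) (Real.rpow_nonneg hc0.le _)
  have hi1 : (∫ z in ε..m, g z)
      ≤ F * (π * 2 ^ (2 * τ - 1)) * (ρ / 4) ^ (2 - 2 * τ) * (π / (ρ / 4)) := by
    calc (∫ z in ε..m, g z) ≤ ∫ z in ε..m, G1 z :=
          intervalIntegral.integral_mono_on hεm h1 (hG1c.intervalIntegrable _ _) hpt1
      _ = (F * (π * 2 ^ (2 * τ - 1)) * (ρ / 4) ^ (2 - 2 * τ)) *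
            ∫ z in ε..m, ((ρ / 4) ^ 2 + z ^ 2)⁻¹ := by
          rw [hG1def, intervalIntegral.integral_const_mul]
      _ ≤ _ := mul_le_mul_of_nonneg_left (integral_inv_sq_add_sq_le hc0 _ _) hG1nn
  -- majorant on [m, ε⁻¹]
  have hpt2 : ∀ z ∈ Set.Icc m ε⁻¹,
      g z ≤ F * ((π * 2 ^ (2 * τ - 1)) * (2 * ε) ^ (2 * τ)) := by
    intro z hz
    have hz0 : 0 < z := lt_of_lt_of_le hm0 hz.1
    have hzI : z ∈ Set.Icc ε ε⁻¹ := ⟨hεm.trans hz.1, hz.2⟩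
    have hI := hinner z hzI
    have hQ0 : (0:ℝ) < (edgeProfile ε ρ z * Real.cos (π / n)) ^ 2 + z ^ 2 + 1 := by positivity
    have hzQ : z ^ 2 ≤ (edgeProfile ε ρ z * Real.cos (π / n)) ^ 2 + z ^ 2 + 1 := by
      nlinarith [sq_nonneg (edgeProfile ε ρ z * Real.cos (π / n))]
    have hz20 : (0:ℝ) < z ^ 2 := by positivity
    have hA1 : ((edgeProfile ε ρ z * Real.cos (π / n)) ^ 2 + z ^ 2 + 1) ^ (-(2 * τ - 2))
        ≤ (z ^ 2) ^ (-(2 * τ - 2) : ℝ) :=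
      Real.rpow_le_rpow_of_nonpos hz20 hzQ (by linarith)
    have hA1' : ((z:ℝ) ^ 2) ^ (-(2 * τ - 2) : ℝ) = z ^ (-(4 * τ - 4)) := by
      rw [← Real.rpow_natCast z 2, ← Real.rpow_mul hz0.le]
      congr 1
      push_cast; ring
    have hA2 : π / Real.sqrt ((edgeProfile ε ρ z * Real.cos (π / n)) ^ 2 + z ^ 2 + 1)
        ≤ π * z ^ (-1 : ℝ) := by
      have k1 : z ≤ Real.sqrt ((edgeProfile ε ρ z * Real.cos (π / n)) ^ 2 + z ^ 2 + 1) := by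
        have := Real.sqrt_le_sqrt hzQ
        rwa [Real.sqrt_sq hz0.le] at this
      have k3 : (Real.sqrt ((edgeProfile ε ρ z * Real.cos (π / n)) ^ 2 + z ^ 2 + 1))⁻¹ ≤ z⁻¹ :=
        inv_anti₀ hz0 k1
      rw [div_eq_mul_inv, Real.rpow_neg_one]
      exact mul_le_mul_of_nonneg_left k3 pi_pos.le
    have ez2 : (z ^ 2)⁻¹ = z ^ (-2 : ℝ) := by
      rw [← Real.rpow_natCast z 2, ← Real.rpow_neg hz0.le]
      norm_num
    have hB : ((2 * z) ^ (2 * τ - 1) *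
          ((edgeProfile ε ρ z * Real.cos (π / n)) ^ 2 + z ^ 2 + 1) ^ (-(2 * τ - 2))) *
        (π / Real.sqrt ((edgeProfile ε ρ z * Real.cos (π / n)) ^ 2 + z ^ 2 + 1))
        ≤ ((2 * z) ^ (2 * τ - 1) * z ^ (-(4 * τ - 4))) * (π * z ^ (-1 : ℝ)) := by
      apply mul_le_mul ?_ hA2 (by positivity) ?_
      · rw [← hA1']
        exact mul_le_mul_of_nonneg_left hA1 (Real.rpow_nonneg (by linarith) _)
      · exact mul_nonneg (Real.rpow_nonneg (by linarith) _) (Real.rpow_nonneg hz0.le _)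
    have eC : ((2 * z) ^ (2 * τ - 1) * z ^ (-(4 * τ - 4))) * (π * z ^ (-1 : ℝ)) * (z ^ 2)⁻¹
        = (π * 2 ^ (2 * τ - 1)) * z ^ (-(2 * τ)) := by
      rw [ez2, Real.mul_rpow (by norm_num : (0:ℝ) ≤ 2) hz0.le,
        show (2:ℝ) ^ (2 * τ - 1) * z ^ (2 * τ - 1) * z ^ (-(4 * τ - 4)) * (π * z ^ (-1:ℝ)) * z ^ (-2:ℝ)
          = (π * 2 ^ (2 * τ - 1)) * (z ^ (2 * τ - 1) * z ^ (-(4 * τ - 4)) * z ^ (-1:ℝ) * z ^ (-2:ℝ)) by ring,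
        ← Real.rpow_add hz0, ← Real.rpow_add hz0, ← Real.rpow_add hz0,
        show (2 * τ - 1) + -(4 * τ - 4) + -1 + -2 = -(2 * τ) by ring]
    have hb3 : z ^ (-(2 * τ)) ≤ (2 * ε) ^ (2 * τ) := by
      have k1 : z ^ (-(2 * τ)) ≤ m ^ (-(2 * τ)) :=
        Real.rpow_le_rpow_of_nonpos hm0 hz.1 (by linarith)
      have k2 : m ^ (-(2 * τ)) = (2 * ε) ^ (2 * τ) := by
        rw [hm, Real.inv_rpow h2ε.le, ← Real.rpow_neg h2ε.le, neg_neg]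
      linarith
    calc g z = (∫ y in (-(edgeProfile ε ρ z * Real.sin (π / n)))..(edgeProfile ε ρ z * Real.sin (π / n)),
          (coshR (edgeProfile ε ρ z * Real.cos (π / n)) y z) ^ (-2 * τ + 1)) * (z ^ 2)⁻¹ * F := rfl
      _ ≤ (((2 * z) ^ (2 * τ - 1) *
            ((edgeProfile ε ρ z * Real.cos (π / n)) ^ 2 + z ^ 2 + 1) ^ (-(2 * τ - 2))) *
          (π / Real.sqrt ((edgeProfile ε ρ z * Real.cos (π / n)) ^ 2 + z ^ 2 + 1))) * (z ^ 2)⁻¹ * F :=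
          mul_le_mul_of_nonneg_right (mul_le_mul_of_nonneg_right hI (by positivity)) hF0
      _ ≤ (((2 * z) ^ (2 * τ - 1) * z ^ (-(4 * τ - 4))) * (π * z ^ (-1 : ℝ))) * (z ^ 2)⁻¹ * F :=
          mul_le_mul_of_nonneg_right (mul_le_mul_of_nonneg_right hB (by positivity)) hF0
      _ = (π * 2 ^ (2 * τ - 1)) * z ^ (-(2 * τ)) * F := by rw [eC]
      _ ≤ (π * 2 ^ (2 * τ - 1)) * (2 * ε) ^ (2 * τ) * F := by
          apply mul_le_mul_of_nonneg_right ?_ hF0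
          exact mul_le_mul_of_nonneg_left hb3 (by positivity)
      _ = F * ((π * 2 ^ (2 * τ - 1)) * (2 * ε) ^ (2 * τ)) := by ring
  have hconst : (0:ℝ) ≤ F * ((π * 2 ^ (2 * τ - 1)) * (2 * ε) ^ (2 * τ)) := by
    apply mul_nonneg hF0
    apply mul_nonneg (by positivity) (Real.rpow_nonneg h2ε.le _)
  have hi2 : (∫ z in m..ε⁻¹, g z)
      ≤ ε⁻¹ * (F * ((π * 2 ^ (2 * τ - 1)) * (2 * ε) ^ (2 * τ))) := by
    calc (∫ z in m..ε⁻¹, g z)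
        ≤ ∫ _ in m..ε⁻¹, F * ((π * 2 ^ (2 * τ - 1)) * (2 * ε) ^ (2 * τ)) :=
          intervalIntegral.integral_mono_on hmε h2 intervalIntegrable_const hpt2
      _ = (ε⁻¹ - m) * (F * ((π * 2 ^ (2 * τ - 1)) * (2 * ε) ^ (2 * τ))) := by
          rw [intervalIntegral.integral_const, smul_eq_mul]
      _ ≤ _ := mul_le_mul_of_nonneg_right (by linarith) hconst
  -- arithmetic for piece 1
  have t1 : F * (π * 2 ^ (2 * τ - 1)) * (ρ / 4) ^ (2 - 2 * τ) * (π / (ρ / 4))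
      ≤ (1 + 2 * ε * ρ) * ((π + 2) ^ 2 * 2 ^ (3 * (2 * τ - 1) + 1)) * ρ ^ (-(2 * τ - 1)) := by
    have e1 : F * (π * 2 ^ (2 * τ - 1)) * (ρ / 4) ^ (2 - 2 * τ) * (π / (ρ / 4))
        = (π ^ 2 * (2 ^ (2 * τ - 1) * ((4:ℝ) ^ (-(2 - 2 * τ)) * 4 ^ (1:ℝ)))) *
          (ρ ^ (2 - 2 * τ) * ρ ^ (-1:ℝ)) * F := by
      rw [show π / (ρ / 4) = π * (ρ / 4) ^ (-1:ℝ) by rw [Real.rpow_neg_one]; ring,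
        div_pos_rpow (2 - 2 * τ) hρ0 (by norm_num), div_pos_rpow (-1:ℝ) hρ0 (by norm_num),
        neg_neg]
      ring
    have e2 : (4:ℝ) ^ (-(2 - 2 * τ)) * 4 ^ (1:ℝ) = 4 ^ (2 * τ - 1) := by
      rw [← Real.rpow_add (by norm_num : (0:ℝ) < 4),
        show -(2 - 2 * τ) + 1 = 2 * τ - 1 by ring]
    have e4 : (4:ℝ) ^ (2 * τ - 1) = 2 ^ (4 * τ - 2) := by
      have h42 : (4:ℝ) = 2 ^ (2:ℝ) := by
        rw [show (2:ℝ) ^ (2:ℝ) = 2 ^ ((2:ℕ):ℝ) by norm_num, Real.rpow_natCast]; norm_num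
      nth_rewrite 1 [h42]
      rw [← Real.rpow_mul (by norm_num : (0:ℝ) ≤ 2),
        show (2:ℝ) * (2 * τ - 1) = 4 * τ - 2 by ring]
    have e3 : (2:ℝ) ^ (2 * τ - 1) * 2 ^ (4 * τ - 2) = 2 ^ (6 * τ - 3) := by
      rw [← Real.rpow_add two_pos, show (2 * τ - 1) + (4 * τ - 2) = 6 * τ - 3 by ring]
    have e5 : ρ ^ (2 - 2 * τ) * ρ ^ (-1:ℝ) = ρ ^ (-(2 * τ - 1)) := by
      rw [← Real.rpow_add hρ0, show (2 - 2 * τ) + -1 = -(2 * τ - 1) by ring]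
    rw [e1, e2, e4, e3, e5]
    have k1 : (π:ℝ) ^ 2 ≤ (π + 2) ^ 2 := by nlinarith [pi_pos]
    have k2 : (2:ℝ) ^ (6 * τ - 3) ≤ 2 ^ (3 * (2 * τ - 1) + 1) :=
      Real.rpow_le_rpow_of_exponent_le one_le_two (by linarith)
    have k3 : π ^ 2 * 2 ^ (6 * τ - 3) ≤ (π + 2) ^ 2 * 2 ^ (3 * (2 * τ - 1) + 1) :=
      mul_le_mul k1 k2 (Real.rpow_nonneg (by norm_num) _) (sq_nonneg _)
    calc π ^ 2 * 2 ^ (6 * τ - 3) * ρ ^ (-(2 * τ - 1)) * F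
        ≤ π ^ 2 * 2 ^ (6 * τ - 3) * ρ ^ (-(2 * τ - 1)) * (1 + 2 * ε * ρ) :=
          mul_le_mul_of_nonneg_left hFle (by positivity)
      _ ≤ ((π + 2) ^ 2 * 2 ^ (3 * (2 * τ - 1) + 1)) * ρ ^ (-(2 * τ - 1)) * (1 + 2 * ε * ρ) :=
          mul_le_mul_of_nonneg_right (mul_le_mul_of_nonneg_right k3 hrpow0) hF1
      _ = (1 + 2 * ε * ρ) * ((π + 2) ^ 2 * 2 ^ (3 * (2 * τ - 1) + 1)) * ρ ^ (-(2 * τ - 1)) := by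
          ring
  -- arithmetic for piece 2
  have t2 : ε⁻¹ * (F * ((π * 2 ^ (2 * τ - 1)) * (2 * ε) ^ (2 * τ)))
      ≤ (1 + 2 * ε * ρ) * ((π + 2) ^ 2 * 2 ^ (3 * (2 * τ - 1) + 1)) * ε ^ (2 * τ - 1) := by
    have e1 : ε⁻¹ * (F * ((π * 2 ^ (2 * τ - 1)) * (2 * ε) ^ (2 * τ)))
        = (π * (2 ^ (2 * τ - 1) * 2 ^ (2 * τ))) * (ε ^ (2 * τ) * ε ^ (-1:ℝ)) * F := by
      rw [Real.mul_rpow (by norm_num : (0:ℝ) ≤ 2) hε.le, ← Real.rpow_neg_one ε]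
      ring
    have e2 : (2:ℝ) ^ (2 * τ - 1) * 2 ^ (2 * τ) = 2 ^ (4 * τ - 1) := by
      rw [← Real.rpow_add two_pos, show (2 * τ - 1) + 2 * τ = 4 * τ - 1 by ring]
    have e3 : ε ^ (2 * τ) * ε ^ (-1:ℝ) = ε ^ (2 * τ - 1) := by
      rw [← Real.rpow_add hε, show 2 * τ + -1 = 2 * τ - 1 by ring]
    rw [e1, e2, e3]
    have k1 : (π:ℝ) ≤ (π + 2) ^ 2 := by nlinarith [pi_pos]
    have k2 : (2:ℝ) ^ (4 * τ - 1) ≤ 2 ^ (3 * (2 * τ - 1) + 1) :=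
      Real.rpow_le_rpow_of_exponent_le one_le_two (by linarith)
    have k3 : π * 2 ^ (4 * τ - 1) ≤ (π + 2) ^ 2 * 2 ^ (3 * (2 * τ - 1) + 1) :=
      mul_le_mul k1 k2 (Real.rpow_nonneg (by norm_num) _) (sq_nonneg _)
    calc π * 2 ^ (4 * τ - 1) * ε ^ (2 * τ - 1) * F
        ≤ π * 2 ^ (4 * τ - 1) * ε ^ (2 * τ - 1) * (1 + 2 * ε * ρ) :=
          mul_le_mul_of_nonneg_left hFle (by positivity)
      _ ≤ ((π + 2) ^ 2 * 2 ^ (3 * (2 * τ - 1) + 1)) * ε ^ (2 * τ - 1) * (1 + 2 * ε * ρ) :=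
          mul_le_mul_of_nonneg_right (mul_le_mul_of_nonneg_right k3 hepow0) hF1
      _ = (1 + 2 * ε * ρ) * ((π + 2) ^ 2 * 2 ^ (3 * (2 * τ - 1) + 1)) * ε ^ (2 * τ - 1) := by
          ring
  calc (∫ z in ε..m, g z) + (∫ z in m..ε⁻¹, g z)
      ≤ (F * (π * 2 ^ (2 * τ - 1)) * (ρ / 4) ^ (2 - 2 * τ) * (π / (ρ / 4))) +
        (ε⁻¹ * (F * ((π * 2 ^ (2 * τ - 1)) * (2 * ε) ^ (2 * τ)))) := add_le_add hi1 hi2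
    _ ≤ (1 + 2 * ε * ρ) * ((π + 2) ^ 2 * 2 ^ (3 * (2 * τ - 1) + 1)) * ρ ^ (-(2 * τ - 1)) +
        (1 + 2 * ε * ρ) * ((π + 2) ^ 2 * 2 ^ (3 * (2 * τ - 1) + 1)) * ε ^ (2 * τ - 1) :=
          add_le_add t1 t2
    _ = (1 + 2 * ε * ρ) * ((π + 2) ^ 2 * 2 ^ (3 * (2 * τ - 1) + 1)) *
        (ρ ^ (-(2 * τ - 1)) + ε ^ (2 * τ - 1)) := by ring
lemma eps_le_inv {ε : ℝ} (hε : 0 < ε) (hε1 : ε ≤ 1) : ε ≤ ε⁻¹ := by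
  have h1 : (1:ℝ) ≤ ε⁻¹ := by
    have := (inv_anti₀ hε hε1)
    simpa using this
  linarith

lemma baseFace_nonneg {τ ε : ℝ} (n : ℕ) (ρ : ℝ) (hε : 0 < ε) : 0 ≤ baseFaceInt τ n ρ ε :=
  setIntegral_nonneg (measurableSet_ngon n ρ) fun p _ =>
    mul_nonneg (Real.rpow_nonneg (coshR_pos hε).le _) (by positivity)

lemma baseEdge_nonneg {τ ε ρ : ℝ} {n : ℕ} (hn : 3 ≤ n) (hρ : 0 ≤ ρ) (hε : 0 < ε) :
    0 ≤ baseEdgeInt τ n ρ ε := by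
  apply intervalIntegral.integral_nonneg
    (by nlinarith [mul_nonneg hρ (sin_div_nonneg hn)])
  intro y _
  exact mul_nonneg (Real.rpow_nonneg (coshR_pos hε).le _) (by positivity)

lemma slantEdge_nonneg {τ ε ρ : ℝ} (hε : 0 < ε) (hε1 : ε ≤ 1) : 0 ≤ slantEdgeInt τ ρ ε := by
  apply intervalIntegral.integral_nonneg (eps_le_inv hε hε1)
  intro z hz
  have hz0 : 0 < z := lt_of_lt_of_le hε hz.1
  exact mul_nonneg (mul_nonneg (Real.rpow_nonneg (coshR_pos hz0).le _)
    (inv_nonneg.mpr hz0.le)) (Real.sqrt_nonneg _)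

lemma sideFace_nonneg {τ ε ρ : ℝ} {n : ℕ} (hn : 3 ≤ n) (hρ : 0 ≤ ρ) (hε : 0 < ε)
    (hε1 : ε ≤ 1 / 2) : 0 ≤ sideFaceInt τ n ρ ε := by
  have hd : (0:ℝ) < 1 - ε ^ 2 := by nlinarith
  apply intervalIntegral.integral_nonneg (eps_le_inv hε (by linarith))
  intro z hz
  have hz0 : 0 < z := lt_of_lt_of_le hε hz.1
  have hξ : 0 ≤ edgeProfile ε ρ z := by
    have h1 : ε * z ≤ 1 := by
      calc ε * z ≤ ε * ε⁻¹ := mul_le_mul_of_nonneg_left hz.2 hε.le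
        _ = 1 := mul_inv_cancel₀ hε.ne'
    exact div_nonneg (mul_nonneg hρ (by linarith)) hd.le
  have hL : 0 ≤ edgeProfile ε ρ z * Real.sin (π / n) := mul_nonneg hξ (sin_div_nonneg hn)
  apply mul_nonneg (mul_nonneg ?_ (by positivity)) (Real.sqrt_nonneg _)
  apply intervalIntegral.integral_nonneg (by linarith)
  intro y _
  exact Real.rpow_nonneg (coshR_pos hz0).le _

lemma tendsto_rpow_zero' {a : ℝ} (ha : 0 < a) :
    Tendsto (fun ε : ℝ => ε ^ a) (𝓝[>] 0) (𝓝 0) := by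
  have h := (Real.continuousAt_rpow_const 0 a (Or.inr ha.le)).tendsto
  rw [Real.zero_rpow ha.ne'] at h
  exact h.mono_left nhdsWithin_le_nhds


/-- For the truncated-cone polyhedron `Δ_ε` with base the regular `n`-gon of circumradius
`ρ(ε)` in the horosphere `{x³ = ε}` and apex `(0,0,ε⁻¹)`: if `τ > 3/2`, `ρ(ε) → ∞`
and `ρ(ε) = o(ε^{-2τ})` as `ε → 0⁺`, then (using rotational symmetry of `cosh r`)
both `∫_{∂Δ_ε} cosh^{-2τ+1} r dσ̄` — the base-face integral plus `n` congruent side-face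
integrals — and `∫_{E_ε} cosh^{-2τ+1} r dλ̄` — `n` congruent slanted-edge integrals plus
`n` congruent base-edge integrals — tend to `0` as `ε → 0⁺`. -/
theorem polyhedron_error_terms (τ : ℝ) (hτ : 3 / 2 < τ) (n : ℕ) (hn : 3 ≤ n)
    (ρ : ℝ → ℝ) (hρpos : ∀ ε > 0, 0 < ρ ε)
    (hρtop : Tendsto ρ (𝓝[>] 0) atTop)
    (hρo : (fun ε => ρ ε) =o[𝓝[>] (0:ℝ)] (fun ε => ε ^ (-2 * τ))) :
    Tendsto (fun ε : ℝ => baseFaceInt τ n (ρ ε) ε + n * sideFaceInt τ n (ρ ε) ε)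
        (𝓝[>] 0) (𝓝 0) ∧
    Tendsto (fun ε : ℝ => n * slantEdgeInt τ (ρ ε) ε + n * baseEdgeInt τ n (ρ ε) ε)
        (𝓝[>] 0) (𝓝 0) := by

  have hev_pos : ∀ᶠ ε in 𝓝[>] (0:ℝ), 0 < ε :=
    eventually_mem_nhdsWithin.mono fun x hx => hx
  have hev_half : ∀ᶠ ε in 𝓝[>] (0:ℝ), ε < 1 / 2 := by
    have h12 : Set.Iio (1/2 : ℝ) ∈ 𝓝 (0:ℝ) := Iio_mem_nhds (by norm_num)
    exact eventually_of_mem (mem_nhdsWithin_of_mem_nhds h12) fun x hx => hx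
  have hev_rho1 : ∀ᶠ ε in 𝓝[>] (0:ℝ), 1 ≤ ρ ε := hρtop.eventually_ge_atTop 1
  -- the little-o gives ε^(2τ) * ρ ε → 0
  have hlo : Tendsto (fun ε : ℝ => ε ^ (2 * τ) * ρ ε) (𝓝[>] 0) (𝓝 0) := by
    have hne : ∀ᶠ ε in 𝓝[>] (0:ℝ), ε ^ (-2 * τ) = 0 → ρ ε = 0 :=
      hev_pos.mono fun ε hε h => absurd h (by
        have := Real.rpow_pos_of_pos hε (-2 * τ); linarith)
    have ht := (Asymptotics.isLittleO_iff_tendsto' hne).mp hρo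
    apply ht.congr' ((hev_pos.mono fun ε hε => ?_))
    rw [show (-2 * τ) = -(2 * τ) by ring, Real.rpow_neg hε.le, div_eq_mul_inv, inv_inv, mul_comm]
  -- the common bound for side face and slant edge
  set K : ℝ := (π + 2) ^ 2 * 2 ^ (3 * (2 * τ - 1) + 1) with hKdef
  have hK0 : 0 ≤ K := by positivity
  set D : ℝ → ℝ := fun ε =>
    K * ((ρ ε) ^ (-(2 * τ - 1)) + ε ^ (2 * τ - 1) + 2 * ε + 2 * (ε ^ (2 * τ) * ρ ε)) with hDdef
  have hDlim : Tendsto D (𝓝[>] 0) (𝓝 0) := by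
    have t1 : Tendsto (fun ε : ℝ => (ρ ε) ^ (-(2 * τ - 1))) (𝓝[>] 0) (𝓝 0) :=
      (tendsto_rpow_neg_atTop (by linarith)).comp hρtop
    have t2 : Tendsto (fun ε : ℝ => ε ^ (2 * τ - 1)) (𝓝[>] 0) (𝓝 0) :=
      tendsto_rpow_zero' (by linarith)
    have t3 : Tendsto (fun ε : ℝ => 2 * ε) (𝓝[>] 0) (𝓝 0) := by
      have : Tendsto (fun ε : ℝ => ε) (𝓝[>] 0) (𝓝 0) :=
        tendsto_id.mono_left nhdsWithin_le_nhds
      simpa using this.const_mul 2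
    have t4 : Tendsto (fun ε : ℝ => 2 * (ε ^ (2 * τ) * ρ ε)) (𝓝[>] 0) (𝓝 0) := by
      simpa using hlo.const_mul 2
    have h := (((t1.add t2).add t3).add t4).const_mul K
    simp only [add_zero, mul_zero] at h
    exact h
  have hBD : ∀ᶠ ε in 𝓝[>] (0:ℝ),
      (1 + 2 * ε * ρ ε) * K * ((ρ ε) ^ (-(2 * τ - 1)) + ε ^ (2 * τ - 1)) ≤ D ε := by
    filter_upwards [hev_pos, hev_rho1] with ε hε hρ1
    have hρ0 : (0:ℝ) < ρ ε := by linarith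
    have h1 : ρ ε * (ρ ε) ^ (-(2 * τ - 1)) ≤ 1 := by
      have e1 : ρ ε * (ρ ε) ^ (-(2 * τ - 1)) = (ρ ε) ^ (2 - 2 * τ) := by
        nth_rewrite 1 [show ρ ε = (ρ ε) ^ (1:ℝ) by rw [Real.rpow_one]]
        rw [← Real.rpow_add hρ0, show 1 + -(2 * τ - 1) = 2 - 2 * τ by ring]
      rw [e1]
      exact Real.rpow_le_one_of_one_le_of_nonpos hρ1 (by linarith)
    have h2 : ε * ε ^ (2 * τ - 1) = ε ^ (2 * τ) := by
      nth_rewrite 1 [show ε = ε ^ (1:ℝ) by rw [Real.rpow_one]]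
      rw [← Real.rpow_add hε, show 1 + (2 * τ - 1) = 2 * τ by ring]
    have hXY : (1 + 2 * ε * ρ ε) * ((ρ ε) ^ (-(2 * τ - 1)) + ε ^ (2 * τ - 1))
        ≤ (ρ ε) ^ (-(2 * τ - 1)) + ε ^ (2 * τ - 1) + 2 * ε + 2 * (ε ^ (2 * τ) * ρ ε) := by
      have e0 : (1 + 2 * ε * ρ ε) * ((ρ ε) ^ (-(2 * τ - 1)) + ε ^ (2 * τ - 1))
          = (ρ ε) ^ (-(2 * τ - 1)) + ε ^ (2 * τ - 1) +
            2 * ε * (ρ ε * (ρ ε) ^ (-(2 * τ - 1))) + 2 * ρ ε * (ε * ε ^ (2 * τ - 1)) := by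
        ring
      rw [e0, h2]
      have b1 : 2 * ε * (ρ ε * (ρ ε) ^ (-(2 * τ - 1))) ≤ 2 * ε * 1 :=
        mul_le_mul_of_nonneg_left h1 (by linarith)
      have b2 : (2:ℝ) * ρ ε * ε ^ (2 * τ) = 2 * (ε ^ (2 * τ) * ρ ε) := by ring
      linarith [b2.le]
    calc (1 + 2 * ε * ρ ε) * K * ((ρ ε) ^ (-(2 * τ - 1)) + ε ^ (2 * τ - 1))
        = K * ((1 + 2 * ε * ρ ε) * ((ρ ε) ^ (-(2 * τ - 1)) + ε ^ (2 * τ - 1))) := by ring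
      _ ≤ K * ((ρ ε) ^ (-(2 * τ - 1)) + ε ^ (2 * τ - 1) + 2 * ε + 2 * (ε ^ (2 * τ) * ρ ε)) :=
          mul_le_mul_of_nonneg_left hXY hK0
      _ = D ε := by rw [hDdef]
  -- base face tends to zero
  have Tbf : Tendsto (fun ε : ℝ => baseFaceInt τ n (ρ ε) ε) (𝓝[>] 0) (𝓝 0) := by
    apply squeeze_zero' (hev_pos.mono fun ε hε => baseFace_nonneg n (ρ ε) hε)
      (hev_pos.mono fun ε hε => baseFace_bound hτ n (ρ ε) hε)
    have := (tendsto_rpow_zero' (show (0:ℝ) < 2 * τ - 3 by linarith)).const_mul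
      (2 ^ (2 * τ - 1) * C2)
    simpa [mul_assoc] using this
  have Tbe : Tendsto (fun ε : ℝ => baseEdgeInt τ n (ρ ε) ε) (𝓝[>] 0) (𝓝 0) := by
    apply squeeze_zero'
      (hev_pos.mono fun ε hε => baseEdge_nonneg hn (hρpos ε hε).le hε)
      (hev_pos.mono fun ε hε => baseEdge_bound hτ hn (hρpos ε hε).le hε)
    have := (tendsto_rpow_zero' (show (0:ℝ) < 2 * τ - 2 by linarith)).const_mul
      (π * 2 ^ (2 * τ - 1))
    simpa [mul_assoc] using this
  have Tse : Tendsto (fun ε : ℝ => slantEdgeInt τ (ρ ε) ε) (𝓝[>] 0) (𝓝 0) := by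
    apply squeeze_zero' ?_ ?_ hDlim
    · filter_upwards [hev_pos, hev_half] with ε h1 h2
      exact slantEdge_nonneg h1 (by linarith)
    · filter_upwards [hev_pos, hev_half, hev_rho1, hBD] with ε h1 h2 h3 h4
      exact (slantEdge_bound hτ h3 h1 (by linarith)).trans h4
  have Tsf : Tendsto (fun ε : ℝ => sideFaceInt τ n (ρ ε) ε) (𝓝[>] 0) (𝓝 0) := by
    apply squeeze_zero' ?_ ?_ hDlim
    · filter_upwards [hev_pos, hev_half] with ε h1 h2
      exact sideFace_nonneg hn (hρpos ε h1).le h1 (by linarith)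
    · filter_upwards [hev_pos, hev_half, hev_rho1, hBD] with ε h1 h2 h3 h4
      exact (sideFace_bound hτ hn h3 h1 (by linarith)).trans h4
  constructor
  · have := Tbf.add (Tsf.const_mul (n:ℝ))
    simpa using this
  · have := (Tse.const_mul (n:ℝ)).add (Tbe.const_mul (n:ℝ))
    simpa using this
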